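/- In the Trimmed Graphical Lasso deterministic setting, under hypotheses (H1)–(H4) and assuming the off-diagonal support S of Θ* satisfies |S| ≤ k, the error matrix satisfies the off-diagonal ℓ1 bound ‖Δ̃‖_{1,off} ≤ (2/(λκ))·(3λ√(k+p) + τ1)². (Theorem 1, off-diagonal ℓ1-norm error bound.) -/

import Mathlib

open Matrix

/-- Trace inner product ⟨U,V⟩ = tr(U Vᵀ). -/
noncomputable def traceInner {p : ℕ} (U V : Matrix (Fin p) (Fin p) ℝ) : ℝ :=
  (U * Vᵀ).trace

/-- Frobenius norm. -/
noncomputable def frobNorm {p : ℕ} (U : Matrix (Fin p) (Fin p) ℝ) : ℝ :=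
  Real.sqrt (∑ i, ∑ j, (U i j) ^ 2)

/-- Entrywise ℓ1 norm: ‖U‖₁ = Σ_{i,j} |U_{ij}|. -/
noncomputable def l1Norm {p : ℕ} (U : Matrix (Fin p) (Fin p) ℝ) : ℝ :=
  ∑ i, ∑ j, |U i j|

/-- Off-diagonal entrywise ℓ1 norm: ‖U‖_{1,off} = Σ_{i≠j} |U_{ij}|. -/
noncomputable def offNorm {p : ℕ} (U : Matrix (Fin p) (Fin p) ℝ) : ℝ :=
  ∑ ij ∈ Finset.univ.filter (fun ij : Fin p × Fin p => ij.1 ≠ ij.2), |U ij.1 ij.2|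

/-- Entrywise sup norm: ‖U‖_∞ = max_{i,j} |U_{ij}|. -/
noncomputable def linfNorm {p : ℕ} (U : Matrix (Fin p) (Fin p) ℝ) : ℝ :=
  ⨆ ij : Fin p × Fin p, |U ij.1 ij.2|

/-!
Write `Δ = Θ̃ - Θ*` and let `S` be the off-diagonal support of `Θ*`. Stationarity, structural
incoherence, Hölder's inequality with the choice of `λ`, and decomposability of the off-diagonal
`ℓ₁` norm along `S` give the basic inequality
`⟨Θ*⁻¹ - Θ̃⁻¹, Δ⟩ ≤ λ (‖Δ_S‖₁ - ‖Δ_{Sᶜ}‖₁) + (λ/2) ‖Δ‖₁ + τ₁ ‖Δ‖_F`.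
Since `‖Δ‖₁ ≤ 2R` and `3λR ≤ κ - τ₁`, restricted strong convexity together with monotonicity of
the matrix inverse along the segment `[Θ*, Θ̃]` forces `‖Δ‖_F ≤ 1`, so restricted strong convexity
applies to `Δ` itself. Cauchy–Schwarz over the at most `k + p` entries of `S` and the diagonal then
gives `κ ‖Δ‖_F ≤ (3/2) λ √(k + p) + τ₁`, and feeding this back bounds `‖Δ‖_{1,off}`.
-/

open Finset

section

variable {p : ℕ}

lemma traceInner_eq_sum (U V : Matrix (Fin p) (Fin p) ℝ) :
    traceInner U V = ∑ i, ∑ j, U i j * V i j := by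
  simp [traceInner, Matrix.trace, Matrix.mul_apply]

lemma traceInner_add_left (U W V : Matrix (Fin p) (Fin p) ℝ) :
    traceInner (U + W) V = traceInner U V + traceInner W V := by
  simp [traceInner, Matrix.add_mul]

lemma traceInner_sub_left (U W V : Matrix (Fin p) (Fin p) ℝ) :
    traceInner (U - W) V = traceInner U V - traceInner W V := by
  simp [traceInner, Matrix.sub_mul]

lemma traceInner_smul_right (U V : Matrix (Fin p) (Fin p) ℝ) (t : ℝ) :
    traceInner U (t • V) = t * traceInner U V := by
  simp [traceInner]

lemma frobNorm_nonneg (U : Matrix (Fin p) (Fin p) ℝ) : 0 ≤ frobNorm U :=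
  Real.sqrt_nonneg _

lemma frobNorm_smul (U : Matrix (Fin p) (Fin p) ℝ) {t : ℝ} (ht : 0 ≤ t) :
    frobNorm (t • U) = t * frobNorm U := by
  simp only [frobNorm, Matrix.smul_apply, smul_eq_mul, mul_pow, ← Finset.mul_sum]
  rw [Real.sqrt_mul (sq_nonneg t), Real.sqrt_sq ht]

lemma l1Norm_nonneg (U : Matrix (Fin p) (Fin p) ℝ) : 0 ≤ l1Norm U := by
  unfold l1Norm; positivity

lemma l1Norm_sub_le (U V : Matrix (Fin p) (Fin p) ℝ) :
    l1Norm (U - V) ≤ l1Norm U + l1Norm V := by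
  simp only [l1Norm, ← Finset.sum_add_distrib]
  gcongr with i _ j _
  exact abs_sub _ _

lemma abs_le_linfNorm (U : Matrix (Fin p) (Fin p) ℝ) (i j : Fin p) : |U i j| ≤ linfNorm U :=
  le_ciSup (f := fun ij : Fin p × Fin p => |U ij.1 ij.2|) (Set.finite_range _).bddAbove (i, j)

lemma abs_traceInner_le_linfNorm_mul_l1Norm (U V : Matrix (Fin p) (Fin p) ℝ) :
    |traceInner U V| ≤ linfNorm U * l1Norm V := by
  rw [traceInner_eq_sum, l1Norm, Finset.mul_sum]
  refine (Finset.abs_sum_le_sum_abs _ _).trans (Finset.sum_le_sum fun i _ => ?_)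
  rw [Finset.mul_sum]
  refine (Finset.abs_sum_le_sum_abs _ _).trans (Finset.sum_le_sum fun j _ => ?_)
  rw [abs_mul]
  exact mul_le_mul_of_nonneg_right (abs_le_linfNorm U i j) (abs_nonneg _)

lemma sum_abs_le_sqrt_card_mul_frobNorm (U : Matrix (Fin p) (Fin p) ℝ)
    (T : Finset (Fin p × Fin p)) :
    ∑ ij ∈ T, |U ij.1 ij.2| ≤ √(#T : ℝ) * frobNorm U := by
  have hsq : ∑ ij ∈ T, |U ij.1 ij.2| ^ 2 ≤ ∑ i, ∑ j, U i j ^ 2 := by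
    rw [← Fintype.sum_prod_type']
    simp only [sq_abs]
    exact Finset.sum_le_sum_of_subset_of_nonneg (Finset.subset_univ T) fun _ _ _ => sq_nonneg _
  rw [frobNorm, ← Real.sqrt_mul (Nat.cast_nonneg _)]
  refine Real.le_sqrt_of_sq_le ?_
  calc (∑ ij ∈ T, |U ij.1 ij.2|) ^ 2 ≤ #T * ∑ ij ∈ T, |U ij.1 ij.2| ^ 2 :=
        sq_sum_le_card_mul_sum_sq
    _ ≤ #T * ∑ i, ∑ j, U i j ^ 2 := by gcongr

noncomputable def offSupport (Θ : Matrix (Fin p) (Fin p) ℝ) : Finset (Fin p × Fin p) :=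
  univ.filter fun ij => ij.1 ≠ ij.2 ∧ Θ ij.1 ij.2 ≠ 0

lemma offSupport_subset_offDiag (Θ : Matrix (Fin p) (Fin p) ℝ) :
    offSupport Θ ⊆ (univ : Finset (Fin p)).offDiag := by
  intro ij hij
  simp only [offSupport, mem_filter] at hij
  simpa [mem_offDiag] using hij.2.1

lemma offNorm_eq_sum_offDiag (U : Matrix (Fin p) (Fin p) ℝ) :
    offNorm U = ∑ ij ∈ (univ : Finset (Fin p)).offDiag, |U ij.1 ij.2| := by
  rw [offNorm]
  congr 1
  ext ij
  simp [mem_offDiag]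

lemma offNorm_eq_sum_add_sum_sdiff {S : Finset (Fin p × Fin p)}
    (hS : S ⊆ (univ : Finset (Fin p)).offDiag) (U : Matrix (Fin p) (Fin p) ℝ) :
    offNorm U = ∑ ij ∈ S, |U ij.1 ij.2| + ∑ ij ∈ univ.offDiag \ S, |U ij.1 ij.2| := by
  rw [offNorm_eq_sum_offDiag, ← sum_sdiff hS, add_comm]

lemma l1Norm_eq_offNorm_add_sum_diag (U : Matrix (Fin p) (Fin p) ℝ) :
    l1Norm U = offNorm U + ∑ i, |U i i| := by
  rw [l1Norm, ← Fintype.sum_prod_type', offNorm_eq_sum_offDiag, ← univ_product_univ,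
    ← diag_union_offDiag, sum_union (disjoint_diag_offDiag _), add_comm]
  simp [Finset.diag]

lemma offNorm_sub_offNorm_le (Θ Θ' : Matrix (Fin p) (Fin p) ℝ) :
    offNorm Θ - offNorm Θ' ≤ ∑ ij ∈ offSupport Θ, |(Θ' - Θ) ij.1 ij.2|
      - ∑ ij ∈ univ.offDiag \ offSupport Θ, |(Θ' - Θ) ij.1 ij.2| := by
  rw [offNorm_eq_sum_add_sum_sdiff (offSupport_subset_offDiag Θ),
    offNorm_eq_sum_add_sum_sdiff (offSupport_subset_offDiag Θ)]
  have hsupp : ∑ ij ∈ offSupport Θ, (|Θ ij.1 ij.2| - |Θ' ij.1 ij.2|)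
      ≤ ∑ ij ∈ offSupport Θ, |(Θ' - Θ) ij.1 ij.2| := by
    gcongr with ij
    rw [Matrix.sub_apply, abs_sub_comm]
    exact abs_sub_abs_le_abs_sub _ _
  have hcompl : ∑ ij ∈ univ.offDiag \ offSupport Θ, |Θ ij.1 ij.2| = 0 := by
    refine sum_eq_zero fun ij hij => ?_
    simp_all [offSupport, mem_offDiag]
  have hcompl' : ∑ ij ∈ univ.offDiag \ offSupport Θ, |(Θ' - Θ) ij.1 ij.2|
      = ∑ ij ∈ univ.offDiag \ offSupport Θ, |Θ' ij.1 ij.2| := by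
    refine sum_congr rfl fun ij hij => ?_
    simp_all [offSupport, mem_offDiag]
  rw [sum_sub_distrib] at hsupp
  linarith

lemma sum_add_sum_diag_le_sqrt_mul_frobNorm {S : Finset (Fin p × Fin p)}
    (hS : S ⊆ (univ : Finset (Fin p)).offDiag) (U : Matrix (Fin p) (Fin p) ℝ) :
    ∑ ij ∈ S, |U ij.1 ij.2| + ∑ i, |U i i| ≤ √((#S : ℝ) + p) * frobNorm U := by
  have hdisj : Disjoint S univ.diag := (disjoint_diag_offDiag _).symm.mono_left hS
  have hdiag : ∑ i, |U i i| = ∑ ij ∈ (univ : Finset (Fin p)).diag, |U ij.1 ij.2| := by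
    simp [Finset.diag]
  have hcard : (#(S ∪ univ.diag) : ℝ) ≤ #S + p := by
    rw [card_union_of_disjoint hdisj, diag_card]
    simp
  rw [hdiag, ← sum_union hdisj]
  refine (sum_abs_le_sqrt_card_mul_frobNorm U _).trans ?_
  gcongr
  exact frobNorm_nonneg U

open scoped MatrixOrder in
/-- Monotonicity of the matrix inverse: with `C = B - A` and `Q = B^{-1/2}`, the pairing equals
`tr (Qᵀ (Cᵀ A⁻¹ C) Q) ≥ 0`. -/
lemma traceInner_inv_sub_inv_nonneg {A B : Matrix (Fin p) (Fin p) ℝ} (hA : A.PosDef)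
    (hB : B.PosDef) : 0 ≤ traceInner (A⁻¹ - B⁻¹) (B - A) := by
  set C := B - A
  have hC : Cᴴ = C := (hB.1.sub hA.1).eq
  obtain ⟨Q, hQ, hQh⟩ : ∃ Q : Matrix (Fin p) (Fin p) ℝ, Q * Q = B⁻¹ ∧ Qᴴ = Q :=
    ⟨CFC.sqrt B⁻¹, CFC.sqrt_mul_sqrt_self _ hB.inv.posSemidef.nonneg,
      (CFC.sqrt_nonneg _).posSemidef.isHermitian.eq⟩
  have hinv : A⁻¹ - B⁻¹ = A⁻¹ * C * B⁻¹ := by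
    rw [Matrix.mul_sub, Matrix.sub_mul, Matrix.mul_assoc,
      Matrix.mul_nonsing_inv _ hB.det_pos.ne'.isUnit,
      Matrix.nonsing_inv_mul _ hA.det_pos.ne'.isUnit, Matrix.mul_one, Matrix.one_mul]
  have hpsd := (hA.inv.posSemidef.conjTranspose_mul_mul_same C).conjTranspose_mul_mul_same Q
  rw [hQh, hC] at hpsd
  refine hpsd.trace_nonneg.trans_eq ?_
  rw [traceInner, hinv, ← Matrix.conjTranspose_eq_transpose_of_trivial, hC, ← hQ,
    show A⁻¹ * C * (Q * Q) * C
      = (A⁻¹ * C * Q) * (Q * C) by noncomm_ring,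
    Matrix.trace_mul_comm (A⁻¹ * C * Q)]
  simp only [Matrix.mul_assoc]

lemma isSymm_sub_of_posDef {A B : Matrix (Fin p) (Fin p) ℝ} (hA : A.PosDef) (hB : B.PosDef) :
    (A - B).IsSymm :=
  (isHermitian_iff_isSymm.1 hA.1).sub (isHermitian_iff_isSymm.1 hB.1)

/-- If `Θ'` lay outside the unit Frobenius ball around `Θ`, restricted strong convexity at the
point `Θ + t (Θ' - Θ)` of the segment with `‖t (Θ' - Θ)‖_F = 1`, combined with the monotonicity of
the inverse from there on to `Θ'`, would contradict `hbound`. -/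
lemma frobNorm_sub_le_one {Θ Θ' : Matrix (Fin p) (Fin p) ℝ} (hΘ : Θ.PosDef) (hΘ' : Θ'.PosDef)
    {κ τ a : ℝ}
    (hrsc : ∀ Δ : Matrix (Fin p) (Fin p) ℝ, Δ.IsSymm → (Θ + Δ).PosDef → frobNorm Δ ≤ 1 →
      traceInner (Θ⁻¹ - (Θ + Δ)⁻¹) Δ ≥ κ * frobNorm Δ ^ 2)
    (ha : 0 < a) (hκ : a + τ ≤ κ)
    (hbound : traceInner (Θ⁻¹ - Θ'⁻¹) (Θ' - Θ) ≤ a + τ * frobNorm (Θ' - Θ)) :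
    frobNorm (Θ' - Θ) ≤ 1 := by
  set Δ := Θ' - Θ
  by_contra! hF
  set t := (frobNorm Δ)⁻¹
  have ht0 : 0 < t := inv_pos.2 (one_pos.trans hF)
  have ht1 : t < 1 := inv_lt_one_of_one_lt₀ hF
  have htF : t * frobNorm Δ = 1 := inv_mul_cancel₀ (one_pos.trans hF).ne'
  have hM : (Θ + t • Δ).PosDef := by
    rw [show Θ + t • Δ = (1 - t) • Θ + t • Θ' by simp only [Δ]; module]
    exact (hΘ.smul (sub_pos.2 ht1)).add (hΘ'.smul ht0)
  have hnorm : frobNorm (t • Δ) = 1 := by rw [frobNorm_smul _ ht0.le, htF]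
  have hnear := hrsc (t • Δ) ((isSymm_sub_of_posDef hΘ' hΘ).smul t) hM hnorm.le
  rw [hnorm, traceInner_smul_right] at hnear
  have hfar := traceInner_inv_sub_inv_nonneg hM hΘ'
  rw [show Θ' - (Θ + t • Δ) = (1 - t) • Δ by simp only [Δ]; module, traceInner_smul_right,
    mul_nonneg_iff_of_pos_left (sub_pos.2 ht1)] at hfar
  have hsplit : traceInner (Θ⁻¹ - Θ'⁻¹) Δ
      = traceInner (Θ⁻¹ - (Θ + t • Δ)⁻¹) Δ + traceInner ((Θ + t • Δ)⁻¹ - Θ'⁻¹) Δ := by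
    rw [← traceInner_add_left, sub_add_sub_cancel]
  have : κ < κ := calc
    κ ≤ t * traceInner (Θ⁻¹ - (Θ + t • Δ)⁻¹) Δ := by simpa using hnear
    _ ≤ t * traceInner (Θ⁻¹ - Θ'⁻¹) Δ := by gcongr; linarith
    _ ≤ t * (a + τ * frobNorm Δ) := by gcongr
    _ = t * a + τ := by linear_combination τ * htF
    _ < a + τ := by linarith [mul_lt_of_lt_one_left ha ht1]
    _ ≤ κ := hκ
  exact lt_irrefl κ this

/-- The basic inequality: split `Θ⁻¹ - Θ'⁻¹` as `(W' - Θ'⁻¹) - (W' - W) - (W - Θ⁻¹)` and bound the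
three pairings by stationarity, incoherence and Hölder's inequality. -/
lemma traceInner_inv_sub_inv_le {Θ Θ' W W' : Matrix (Fin p) (Fin p) ℝ} {lam τ₁ τ₂ : ℝ}
    (hstat : traceInner (W' - Θ'⁻¹) (Θ' - Θ) ≤ lam * (offNorm Θ - offNorm Θ'))
    (hincoh : |traceInner (W' - W) (Θ' - Θ)|
      ≤ τ₁ * frobNorm (Θ' - Θ) + τ₂ * l1Norm (Θ' - Θ))
    (hlam : 4 * max (linfNorm (W - Θ⁻¹)) τ₂ ≤ lam) :
    traceInner (Θ⁻¹ - Θ'⁻¹) (Θ' - Θ) ≤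
      lam * (offNorm Θ - offNorm Θ') + lam / 2 * l1Norm (Θ' - Θ) + τ₁ * frobNorm (Θ' - Θ) := by
  have hsplit : Θ⁻¹ - Θ'⁻¹ = (W' - Θ'⁻¹) - (W' - W) - (W - Θ⁻¹) := by abel
  have hHolder := (abs_le.1 (abs_traceInner_le_linfNorm_mul_l1Norm (W - Θ⁻¹) (Θ' - Θ))).1
  have hl1 := l1Norm_nonneg (Θ' - Θ)
  have hW : linfNorm (W - Θ⁻¹) * l1Norm (Θ' - Θ) ≤ lam / 4 * l1Norm (Θ' - Θ) := by
    gcongr; linarith [le_max_left (linfNorm (W - Θ⁻¹)) τ₂]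
  have hτ₂ : τ₂ * l1Norm (Θ' - Θ) ≤ lam / 4 * l1Norm (Θ' - Θ) := by
    gcongr; linarith [le_max_right (linfNorm (W - Θ⁻¹)) τ₂]
  rw [hsplit, traceInner_sub_left, traceInner_sub_left]
  linarith [(abs_le.1 hincoh).1]

/-- The final estimate in terms of `a = ‖Δ_S‖₁`, `b = ‖Δ_{Sᶜ}‖₁`, `d = ‖diag Δ‖₁`, `F = ‖Δ‖_F`
and `s = √(k + p)`. -/
lemma add_le_of_basic_inequality {a b d F s lam κ τ : ℝ} (hb : 0 ≤ b) (hd : 0 ≤ d) (hF : 0 ≤ F)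
    (hs : 0 ≤ s) (hlam : 0 < lam) (hκ : 0 < κ) (hτ : 0 ≤ τ)
    (hbasic : κ * F ^ 2 ≤ lam * (a - b) + lam / 2 * (a + b + d) + τ * F)
    (hcone : a + d ≤ s * F) :
    a + b ≤ 2 / (lam * κ) * (3 * lam * s + τ) ^ 2 := by
  have hcone' := mul_le_mul_of_nonneg_left hcone (by positivity : 0 ≤ lam / 2)
  have hd' := mul_nonneg hlam.le hd
  have hquad : κ * F ^ 2 + lam / 2 * b ≤ (3 * lam / 2 * s + τ) * F := by linarith
  have hF_le : κ * F ≤ 3 * lam / 2 * s + τ := by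
    rcases hF.eq_or_lt with rfl | hFpos
    · simp only [mul_zero]; positivity
    · exact le_of_mul_le_mul_right (by linarith [mul_nonneg hlam.le hb]) hFpos
  have hab : lam / 2 * (a + b) ≤ (2 * lam * s + τ) * F := by
    linarith [mul_nonneg hκ.le (sq_nonneg F)]
  rw [div_mul_eq_mul_div, le_div_iff₀ (by positivity), mul_comm 2]
  calc (a + b) * (lam * κ) = κ * (lam / 2 * (a + b)) * 2 := by ring
    _ ≤ κ * ((2 * lam * s + τ) * F) * 2 := by gcongr
    _ = (2 * lam * s + τ) * (κ * F) * 2 := by ring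
    _ ≤ (2 * lam * s + τ) * (3 * lam / 2 * s + τ) * 2 := by gcongr
    _ ≤ (3 * lam * s + τ) ^ 2 * 2 := by nlinarith [mul_nonneg (mul_nonneg hlam.le hs) hτ]

end

theorem error_offNorm_bound_general
    (p n h : ℕ)
    (x : Fin n → Fin p → ℝ)
    (Θstar Θtil : Matrix (Fin p) (Fin p) ℝ)
    (hΘstar : Θstar.PosDef) (hΘtil : Θtil.PosDef)
    (R : ℝ) (hR : 0 < R) (hΘstarR : l1Norm Θstar ≤ R) (hΘtilR : l1Norm Θtil ≤ R)
    (wtil wstar : Fin n → ℝ)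
    (κ τ₁ τ₂ lam : ℝ) (hκ : 0 < κ) (hτ₁ : 0 ≤ τ₁) (hlam : 0 < lam)
    (H1 : traceInner
        ((1 / (h : ℝ)) • ∑ i, wtil i • Matrix.vecMulVec (x i) (x i) - Θtil⁻¹)
        (Θtil - Θstar) ≤ lam * (offNorm Θstar - offNorm Θtil))
    (H2 : ∀ Δ : Matrix (Fin p) (Fin p) ℝ, Δ.IsSymm → (Θstar + Δ).PosDef →
        frobNorm Δ ≤ 1 →
        traceInner (Θstar⁻¹ - (Θstar + Δ)⁻¹) Δ ≥ κ * (frobNorm Δ) ^ 2)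
    (H3 : |traceInner
        ((1 / (h : ℝ)) • ∑ i, (wtil i - wstar i) • Matrix.vecMulVec (x i) (x i))
        (Θtil - Θstar)|
        ≤ τ₁ * frobNorm (Θtil - Θstar) + τ₂ * l1Norm (Θtil - Θstar))
    (H4a : 4 * max
        (linfNorm ((1 / (h : ℝ)) • ∑ i, wstar i • Matrix.vecMulVec (x i) (x i) - Θstar⁻¹))
        τ₂ ≤ lam)
    (H4b : lam ≤ (κ - τ₁) / (3 * R))
    (k : ℕ)
    (hk : (Finset.univ.filter
        (fun ij : Fin p × Fin p => ij.1 ≠ ij.2 ∧ Θstar ij.1 ij.2 ≠ 0)).card ≤ k) :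
    offNorm (Θtil - Θstar) ≤
      (2 / (lam * κ)) * (3 * lam * Real.sqrt ((k : ℝ) + p) + τ₁) ^ 2 := by
  have hS := offSupport_subset_offDiag Θstar
  simp only [sub_smul, sum_sub_distrib, smul_sub] at H3
  have hbasic := traceInner_inv_sub_inv_le H1 H3 H4a
  have hdecomp := offNorm_sub_offNorm_le Θstar Θtil
  have hoff := offNorm_eq_sum_add_sum_sdiff hS (Θtil - Θstar)
  have hl1 := l1Norm_eq_offNorm_add_sum_diag (Θtil - Θstar)
  have hl1R : l1Norm (Θtil - Θstar) ≤ 2 * R := by linarith [l1Norm_sub_le Θtil Θstar]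
  have hdecomp_l1 : offNorm Θstar - offNorm Θtil ≤ l1Norm (Θtil - Θstar) := by
    have : 0 ≤ ∑ ij ∈ univ.offDiag \ offSupport Θstar, |(Θtil - Θstar) ij.1 ij.2| := by positivity
    have : 0 ≤ ∑ i, |(Θtil - Θstar) i i| := by positivity
    linarith
  have hF : frobNorm (Θtil - Θstar) ≤ 1 := by
    refine frobNorm_sub_le_one (τ := τ₁) hΘstar hΘtil H2 (by positivity : 0 < 3 * lam * R) ?_ ?_
    · rw [le_div_iff₀ (by positivity)] at H4b; linarith
    · linarith [mul_le_mul_of_nonneg_left hdecomp_l1 hlam.le,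
        mul_le_mul_of_nonneg_left hl1R hlam.le]
  have hrsc := H2 _ (isSymm_sub_of_posDef hΘtil hΘstar) (by rwa [add_sub_cancel]) hF
  rw [add_sub_cancel] at hrsc
  have hcone := sum_add_sum_diag_le_sqrt_mul_frobNorm hS (Θtil - Θstar)
  have hk' : √((#(offSupport Θstar) : ℝ) + p) ≤ √((k : ℝ) + p) := by gcongr; exact_mod_cast hk
  rw [hl1, hoff] at hbasic
  rw [hoff]
  refine add_le_of_basic_inequality (by positivity) (by positivity) (frobNorm_nonneg _)
    (Real.sqrt_nonneg _) hlam hκ hτ₁ ?_ (hcone.trans (by gcongr; exact frobNorm_nonneg _))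
  linarith [mul_le_mul_of_nonneg_left hdecomp hlam.le]

/-- Theorem 1, off-diagonal ℓ1-norm error bound. -/
theorem error_offNorm_bound
    (p n h : ℕ) (hp : 0 < p) (hn : 0 < n) (hh : 0 < h)
    (x : Fin n → Fin p → ℝ)
    (Θstar Θtil : Matrix (Fin p) (Fin p) ℝ)
    (hΘstar : Θstar.PosDef) (hΘtil : Θtil.PosDef)
    (R : ℝ) (hR : 0 < R) (hΘstarR : l1Norm Θstar ≤ R) (hΘtilR : l1Norm Θtil ≤ R)
    (wtil wstar : Fin n → ℝ)
    (hwtil : ∀ i, wtil i ∈ Set.Icc (0 : ℝ) 1) (hwstar : ∀ i, wstar i ∈ Set.Icc (0 : ℝ) 1)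
    (κ τ₁ τ₂ lam : ℝ) (hκ : 0 < κ) (hτ₁ : 0 ≤ τ₁) (hτ₂ : 0 ≤ τ₂) (hlam : 0 < lam)
    (H1 : traceInner
        ((1 / (h : ℝ)) • ∑ i, wtil i • Matrix.vecMulVec (x i) (x i) - Θtil⁻¹)
        (Θtil - Θstar) ≤ lam * (offNorm Θstar - offNorm Θtil))
    (H2 : ∀ Δ : Matrix (Fin p) (Fin p) ℝ, Δ.IsSymm → (Θstar + Δ).PosDef →
        frobNorm Δ ≤ 1 →
        traceInner (Θstar⁻¹ - (Θstar + Δ)⁻¹) Δ ≥ κ * (frobNorm Δ) ^ 2)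
    (H3 : |traceInner
        ((1 / (h : ℝ)) • ∑ i, (wtil i - wstar i) • Matrix.vecMulVec (x i) (x i))
        (Θtil - Θstar)|
        ≤ τ₁ * frobNorm (Θtil - Θstar) + τ₂ * l1Norm (Θtil - Θstar))
    (H4a : 4 * max
        (linfNorm ((1 / (h : ℝ)) • ∑ i, wstar i • Matrix.vecMulVec (x i) (x i) - Θstar⁻¹))
        τ₂ ≤ lam)
    (H4b : lam ≤ (κ - τ₁) / (3 * R))
    (k : ℕ)
    (hk : (Finset.univ.filter
        (fun ij : Fin p × Fin p => ij.1 ≠ ij.2 ∧ Θstar ij.1 ij.2 ≠ 0)).card ≤ k) :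
    offNorm (Θtil - Θstar) ≤
      (2 / (lam * κ)) * (3 * lam * Real.sqrt ((k : ℝ) + p) + τ₁) ^ 2 :=
  error_offNorm_bound_general p n h x Θstar Θtil hΘstar hΘtil R hR hΘstarR hΘtilR wtil wstar κ τ₁ τ₂
    lam hκ hτ₁ hlam H1 H2 H3 H4a H4b k hk
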